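/- arXiv:1710.10625 — 4 statements merged into one kernel-verified Lean document; each statement's English description precedes it below -/
import Mathlib

section
/- Let ⟨(a,b),(c,d)⟩ = ad − bc denote the standard symplectic pairing on ℤ², and for v ∈ ℤ² let T_v(x) = x + ⟨v,x⟩·v be the Picard–Lefschetz transvection. If v₁, v₂ ∈ ℤ² are such that the composite T_{v₁} ∘ T_{v₂} has trace 1 (the trace of the monodromy matrix of a type II singular fibre), then ⟨v₁,v₂⟩ = 1 or ⟨v₁,v₂⟩ = −1. In particular, when a type II singular fibre of an elliptic fibration deforms into two type I₁ singular fibres, the intersection pairing of the two vanishing cycles is ±1. -/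
/-- The standard symplectic pairing on `ℤ²`: `⟨(a,b),(c,d)⟩ = ad − bc`. -/
def symplPair (v w : Fin 2 → ℤ) : ℤ := v 0 * w 1 - v 1 * w 0

/-- The Picard–Lefschetz transvection `T_v`, as a `2 × 2` integer matrix:
it acts by `x ↦ x + ⟨v,x⟩·v`. -/
def transvection (v : Fin 2 → ℤ) : Matrix (Fin 2) (Fin 2) ℤ :=
  1 + Matrix.vecMulVec v ![-(v 1), v 0]

theorem trace_transvection_mul_transvection (v w : Fin 2 → ℤ) :
    (transvection v * transvection w).trace = 2 - symplPair v w ^ 2 := by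
  simp only [transvection, symplPair, Matrix.trace_fin_two, Matrix.mul_apply, Fin.sum_univ_two,
    Matrix.add_apply, Matrix.one_fin_two, Matrix.vecMulVec_apply, Matrix.of_apply,
    Matrix.cons_val_zero, Matrix.cons_val_one]
  ring

/-- If the composite `T_{v₁} ∘ T_{v₂}` of the two Picard–Lefschetz transvections has
trace `1` (the trace of the monodromy of a type II singular fibre), then the
intersection pairing of the two vanishing cycles is `⟨v₁,v₂⟩ = ±1`. -/
theorem pairing_eq_pm_one_of_trace_eq_one (v₁ v₂ : Fin 2 → ℤ)
    (h : (transvection v₁ * transvection v₂).trace = 1) :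
    symplPair v₁ v₂ = 1 ∨ symplPair v₁ v₂ = -1 := by
  rw [trace_transvection_mul_transvection] at h
  exact sq_eq_one_iff.mp (by omega)
end

section
/- Let B = [[0,1],[−1,1]] ∈ SL(2,ℤ). Then B² = [[−1,1],[−1,0]], and there is a unique matrix A ∈ SL(2,ℤ) such that A is conjugate in SL(2,ℤ) to B and the product A·B is conjugate in SL(2,ℤ) to [[−1,1],[−1,0]]; namely, A = B. -/
/-- Conjugacy in `SL(2,ℤ)`: `X` and `Y` are conjugate if `X·P = P·Y` for some
integer matrix `P` of determinant `1` (i.e. `X = P·Y·P⁻¹`). -/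
def SL2Conj (X Y : Matrix (Fin 2) (Fin 2) ℤ) : Prop :=
  ∃ P : Matrix (Fin 2) (Fin 2) ℤ, P.det = 1 ∧ X * P = P * Y

lemma SL2Conj_trace {X Y : Matrix (Fin 2) (Fin 2) ℤ} (h : SL2Conj X Y) :
    X.trace = Y.trace := by
  obtain ⟨P, hdet, hXY⟩ := h
  have h1 : P * P.adjugate = 1 := by rw [Matrix.mul_adjugate, hdet, one_smul]
  have h2 : P.adjugate * P = 1 := by rw [Matrix.adjugate_mul, hdet, one_smul]
  have hX : X = P * Y * P.adjugate := by
    calc X = X * (P * P.adjugate) := by rw [h1, mul_one]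
    _ = (X * P) * P.adjugate := by rw [mul_assoc]
    _ = P * Y * P.adjugate := by rw [hXY]
  rw [hX, Matrix.trace_mul_comm, ← mul_assoc, h2, one_mul]

/-- Let `B = [[0,1],[−1,1]]` (type II monodromy). Then `B² = [[−1,1],[−1,0]]`
(type IV monodromy), and the unique matrix `A ∈ SL(2,ℤ)` that is conjugate in
`SL(2,ℤ)` to `B` and such that `A·B` is conjugate in `SL(2,ℤ)` to `[[−1,1],[−1,0]]`
is `A = B`. -/
theorem type_IV_from_two_type_II :
    (!![0, 1; -1, 1] : Matrix (Fin 2) (Fin 2) ℤ) ^ 2 = !![-1, 1; -1, 0] ∧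
    ∀ A : Matrix (Fin 2) (Fin 2) ℤ,
      (A.det = 1 ∧ SL2Conj A !![0, 1; -1, 1] ∧
        SL2Conj (A * !![0, 1; -1, 1]) !![-1, 1; -1, 0])
      ↔ A = !![0, 1; -1, 1] := by
  constructor
  · rw [pow_two]
    norm_num [Matrix.mul_fin_two]
  · intro A
    constructor
    · rintro ⟨hdet, h1, h2⟩
      have t1 := SL2Conj_trace h1
      have t2 := SL2Conj_trace h2
      rw [Matrix.det_fin_two] at hdet
      rw [Matrix.trace_fin_two] at t1
      simp [Matrix.trace_fin_two, Matrix.mul_apply, Fin.sum_univ_two] at t1 t2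
      have hdd : A 1 1 = 1 - A 0 0 := by omega
      have hcc : A 1 0 = A 0 0 + A 0 1 - 2 := by omega
      rw [hdd, hcc] at hdet
      have hb1 : A 0 1 = 1 := by
        nlinarith [sq_nonneg (2*A 0 0 + A 0 1 - 1), sq_nonneg (A 0 1 - 1)]
      have ha0 : A 0 0 = 0 := by nlinarith [sq_nonneg (A 0 0)]
      have hd1 : A 1 1 = 1 := by omega
      -- noop
      have hc1 : A 1 0 = -1 := by omega
      ext i j
      fin_cases i <;> fin_cases j <;> simp [ha0, hb1, hc1, hd1]
    · rintro rfl
      refine ⟨by norm_num [Matrix.det_fin_two], ⟨1, by simp, by simp⟩, ⟨1, by simp, by simp⟩⟩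
end

section
/- Let R = ℤ[[x,y]] be the formal power series ring in two variables, in which 1+x, 1+y and 1+xy are units. Define continuous ring automorphisms of R by K₁: x ↦ x, y ↦ y·(1+x); K₂: x ↦ x·(1+y)⁻¹, y ↦ y; and K₁₂: x ↦ x·(1+xy)⁻¹, y ↦ y·(1+xy). Then the pentagon equation holds: K₁ ∘ K₂ = K₂ ∘ K₁₂ ∘ K₁ as ring automorphisms of R. -/
/-! Both sides are continuous ring endomorphisms of `ℤ[[x,y]]`, and polynomials are dense, so it
suffices to compare them on `x` and `y`. With `a = K₂ x = x/(1+y)` and `b = K₂ (K₁₂ x)`, applying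
`K₂` to the defining relation of `K₁₂ x` gives `b (1 + a y) = a`. On `y` the claim reduces to the
identity `(1 + a y)(1 + b) = 1 + a (1 + y) = 1 + x`; on `x` both sides, multiplied by the unit
`1 + y (1 + x) = (1 + y)(1 + a y)`, equal `x`. -/

open MvPowerSeries

/-- The product topology on `R = ℤ[[x,y]]` (coefficient-wise convergence, with `ℤ`
discrete), with respect to which substitution automorphisms are continuous. -/
instance : TopologicalSpace (MvPowerSeries (Fin 2) ℤ) :=
  @Pi.topologicalSpace ((Fin 2) →₀ ℕ) (fun _ => ℤ) (fun _ => ⊥)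

namespace MvPowerSeries.WithPiTopology

variable {σ R S : Type*} [TopologicalSpace R] [CommSemiring R] [Semiring S] [TopologicalSpace S]
  [T2Space S]

theorem ringHom_ext_of_continuous {φ ψ : MvPowerSeries σ R →+* S}
    (hφ : Continuous φ) (hψ : Continuous ψ) (hC : φ.comp (C (σ := σ)) = ψ.comp C)
    (hX : ∀ i, φ (X i) = ψ (X i)) : φ = ψ := by
  have hpoly : φ.comp MvPolynomial.coeToMvPowerSeries.ringHom =
      ψ.comp MvPolynomial.coeToMvPowerSeries.ringHom :=
    MvPolynomial.ringHom_ext (fun r => by simpa using RingHom.congr_fun hC r)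
      (fun i => by simpa using hX i)
  exact RingHom.coe_inj <|
    denseRange_toMvPowerSeries.equalizer hφ hψ <| congrArg DFunLike.coe hpoly

end MvPowerSeries.WithPiTopology

/- The topology on `ℤ[[x,y]]` is the pi topology for `⊥` on `ℤ`, which equals the metric
topology of `ℤ` but not definitionally: hence the explicit `⊥` in the next two declarations. -/
instance : T2Space (MvPowerSeries (Fin 2) ℤ) :=
  @WithPiTopology.instT2Space _ ℤ ⊥ (@DiscreteTopology.toT2Space ℤ ⊥ (discreteTopology_bot ℤ))

theorem MvPowerSeries.ringHom_ext_of_continuous_int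
    {φ ψ : MvPowerSeries (Fin 2) ℤ →+* MvPowerSeries (Fin 2) ℤ}
    (hφ : Continuous φ) (hψ : Continuous ψ) (hX : ∀ i, φ (X i) = ψ (X i)) : φ = ψ :=
  @WithPiTopology.ringHom_ext_of_continuous _ ℤ _ ⊥ _ _ _ _ _ _ hφ hψ (RingHom.ext_int _ _) hX

/-- The pentagon equation for the Kontsevich–Soibelman transformations of
`R = ℤ[[x,y]]`.  Here `x = X 0`, `y = X 1`, and `K₁ : x ↦ x, y ↦ y(1+x)`,
`K₂ : x ↦ x(1+y)⁻¹, y ↦ y`, `K₁₂ : x ↦ x(1+xy)⁻¹, y ↦ y(1+xy)` are continuous ring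
automorphisms of `R` (the conditions on `K₂ x` and `K₁₂ x` are phrased by clearing
the denominators `1+y` and `1+xy`, which are units of `R`).  Then
`K₁ ∘ K₂ = K₂ ∘ K₁₂ ∘ K₁` as ring automorphisms of `R`. -/
theorem pentagon_equation
    (K₁ K₂ K₁₂ : MvPowerSeries (Fin 2) ℤ ≃+* MvPowerSeries (Fin 2) ℤ)
    (hK₁ : Continuous ⇑K₁) (hK₂ : Continuous ⇑K₂) (hK₁₂ : Continuous ⇑K₁₂)
    (h1x : K₁ (X 0) = X 0)
    (h1y : K₁ (X 1) = X 1 * (1 + X 0))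
    (h2x : K₂ (X 0) * (1 + X 1) = X 0)
    (h2y : K₂ (X 1) = X 1)
    (h12x : K₁₂ (X 0) * (1 + X 0 * X 1) = X 0)
    (h12y : K₁₂ (X 1) = X 1 * (1 + X 0 * X 1)) :
    ∀ f : MvPowerSeries (Fin 2) ℤ, K₁ (K₂ f) = K₂ (K₁₂ (K₁ f)) := by
  set a := K₂ (X 0)
  set b := K₂ (K₁₂ (X 0)) with hb_def
  have hb : b * (1 + a * X 1) = a := by simpa [h2y] using congrArg K₂ h12x
  have hK₁a : K₁ a * (1 + X 1 * (1 + X 0)) = X 0 := by simpa [h1x, h1y] using congrArg K₁ h2x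
  have hX0 : K₁ (K₂ (X 0)) = K₂ (K₁₂ (K₁ (X 0))) := by
    have hu : IsUnit (1 + X 1 * (1 + X 0) : MvPowerSeries (Fin 2) ℤ) :=
      isUnit_iff_constantCoeff.mpr (by simp)
    rw [h1x]
    refine hu.mul_left_injective (hK₁a.trans ?_)
    linear_combination -(1 + X 1) * hb - (1 - b * X 1) * h2x
  have hX1 : K₁ (K₂ (X 1)) = K₂ (K₁₂ (K₁ (X 1))) := by
    simp only [h2y, h1y, map_mul, map_add, map_one, h12y, ← hb_def]
    linear_combination -X 1 * hb - X 1 * h2x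
  intro f
  refine RingHom.congr_fun (f := K₁.toRingHom.comp K₂.toRingHom)
    (g := K₂.toRingHom.comp (K₁₂.toRingHom.comp K₁.toRingHom)) ?_ f
  refine ringHom_ext_of_continuous_int (hK₁.comp hK₂) (hK₂.comp (hK₁₂.comp hK₁)) ?_
  intro i
  fin_cases i
  exacts [hX0, hX1]
end

section
/- There exist polynomials a, b ∈ ℂ[t] with deg a ≤ 8 and deg b ≤ 12 such that the discriminant polynomial 4a³ + 27b² has degree 24 and is squarefree; equivalently, it has exactly 24 distinct roots in ℂ. -/
open Polynomial

/-- There are polynomials `a`, `b` over `ℂ` with `deg a ≤ 8`, `deg b ≤ 12` such that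
the discriminant `4a³ + 27b²` has degree `24` and is squarefree; equivalently, it has
exactly `24` distinct roots in `ℂ`.  (For generic Weierstrass data the discriminant
locus of an elliptic K3 surface consists of `24` distinct points.) -/
theorem generic_K3_discriminant :
    ∃ a b : Polynomial ℂ, a.natDegree ≤ 8 ∧ b.natDegree ≤ 12 ∧
      (4 * a ^ 3 + 27 * b ^ 2).natDegree = 24 ∧
      Squarefree (4 * a ^ 3 + 27 * b ^ 2) ∧
      {z : ℂ | (4 * a ^ 3 + 27 * b ^ 2).eval z = 0}.ncard = 24 := by
  have hp : (4 * ((X:ℂ[X]) ^ 8) ^ 3 + 27 * 1 ^ 2)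
      = C 4 * (X ^ 24 - C (-(27/4))) := by
    rw [mul_sub, ← C_mul, ← pow_mul]
    norm_num
    rw [show ((4:ℂ[X]) = C 4) from (map_ofNat C 4).symm,
      show ((27:ℂ[X]) = C 27) from (map_ofNat C 27).symm]
  have hne : (X ^ 24 - C (-(27/4) : ℂ)) ≠ 0 := X_pow_sub_C_ne_zero (by norm_num) _
  have hsep : (X ^ 24 - C (-(27/4) : ℂ)).Separable :=
    separable_X_pow_sub_C _ (by norm_num) (by norm_num)
  have hsep' : (4 * ((X:ℂ[X]) ^ 8) ^ 3 + 27 * 1 ^ 2).Separable := by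
    rw [hp]; exact hsep.unit_mul (isUnit_C.mpr (by norm_num))
  refine ⟨X ^ 8, 1, by simp, by simp, ?_, hsep'.squarefree, ?_⟩
  · rw [hp, natDegree_C_mul (by norm_num), natDegree_X_pow_sub_C]
  · have hs : {z : ℂ | (4 * ((X:ℂ[X]) ^ 8) ^ 3 + 27 * 1 ^ 2).eval z = 0}
        = (X ^ 24 - C (-(27/4) : ℂ)).rootSet ℂ := by
      ext z
      have h4 : (4:ℂ) ≠ 0 := by norm_num
      simp only [Set.mem_setOf_eq, hp, mem_rootSet_of_ne hne, ← coe_aeval_eq_eval,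
        Function.comp, map_mul, aeval_C, mul_eq_zero, Algebra.algebraMap_self_apply, h4, false_or]
    rw [hs, Set.ncard_eq_toFinset_card', Set.toFinset_card,
      card_rootSet_eq_natDegree hsep (IsAlgClosed.splits _),
      natDegree_X_pow_sub_C]
end
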